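/- arXiv:math/0602103 — 2 statements merged into one kernel-verified Lean document; each statement's English description precedes it below -/
import Mathlib

section
/- Every automorphism of the skeleton category _S𝒜⁰_Sk of finitely generated free left S-acts is semi-inner. -/
open CategoryTheory

/-- `f : S × X → S × Y` is a homomorphism of free left `S`-acts, where the action of
`S` on `S × X` is `s • (t, x) = (s * t, x)`. -/
def IsActHom (S : Type) [Monoid S] {X Y : Type} (f : S × X → S × Y) : Prop :=
  ∀ (s : S) (p : S × X), f (s * p.1, p.2) = (s * (f p).1, (f p).2)

/-- The skeleton category `_S𝒜⁰_Sk` of finitely generated free left `S`-acts: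
objects are natural numbers `n`, standing for the free act `Fₙ = S × Fin n`. -/
def SkFree (S : Type) [Monoid S] : Type := ℕ

/-- The category structure on `_S𝒜⁰_Sk`: morphisms `n ⟶ m` are the `S`-equivariant maps
`S × Fin n → S × Fin m`. -/
instance (S : Type) [Monoid S] : Category (SkFree S) where
  Hom n m := {f : S × Fin n → S × Fin m // IsActHom S f}
  id n := ⟨fun p => p, fun _ _ => rfl⟩
  comp f g := ⟨fun p => g.1 (f.1 p), fun s p => by
    show g.1 (f.1 (s * p.1, p.2)) = _; rw [f.2 s p]; exact g.2 s (f.1 p)⟩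

/-- An automorphism of a category `C`: a functor `C ⥤ C` admitting a functor `ψ` with
`φ ⋙ ψ` and `ψ ⋙ φ` equal (not merely isomorphic) to the identity functor. -/
def IsCatAutomorphism {C : Type*} [Category C] (φ : C ⥤ C) : Prop :=
  ∃ ψ : C ⥤ C, φ ⋙ ψ = 𝟭 C ∧ ψ ⋙ φ = 𝟭 C

/-- An automorphism `φ` of the skeleton category `_S𝒜⁰_Sk` is *semi-inner with associated
monoid automorphism `σ`* if there is a family of bijections `s_{Fₙ} : Fₙ ≃ φ(Fₙ)` that are
`σ`-semilinear, i.e. `s_{Fₙ} (s • a) = σ s • s_{Fₙ} a`, and commute with all morphisms: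
`φ(f) ∘ s_{Fₙ} = s_{Fₘ} ∘ f`. -/
def SemiInnerWithSk (S : Type) [Monoid S] (φ : SkFree S ⥤ SkFree S) (σ : S ≃* S) : Prop :=
  ∃ e : ∀ n : SkFree S, (S × Fin n) ≃ (S × Fin (φ.obj n)),
    (∀ (n : SkFree S) (s : S) (p : S × Fin n),
        e n (s * p.1, p.2) = (σ s * (e n p).1, (e n p).2)) ∧
    ∀ {n m : SkFree S} (f : n ⟶ m) (p : S × Fin n), (φ.map f).1 (e n p) = e m (f.1 p)

/-- An automorphism of `_S𝒜⁰_Sk` is *semi-inner* if it is semi-inner with respect to some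
monoid automorphism of `S`. -/
def SemiInnerSk (S : Type) [Monoid S] (φ : SkFree S ⥤ SkFree S) : Prop :=
  ∃ σ : S ≃* S, SemiInnerWithSk S φ σ

/-!
An equivalence of categories preserves the property of being a retract of every object one maps
to, and among the free acts `Fₙ` only `F₁` has it, so `φ` fixes `F₁`. As `F₁` is free on one
generator, `Hom(F₁, Fₙ) ≃ Fₙ` and `End(F₁) ≃* Sᵐᵒᵖ`; transporting these through the hom-set
bijections of `φ` gives the bijections `s_{Fₙ}` and the automorphism `σ`. Semilinearity and
naturality are then functoriality, since `s • a` corresponds to precomposing `a : F₁ ⟶ Fₙ` with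
right multiplication by `s` on `F₁`.
-/

namespace CategoryTheory

variable {C D : Type*} [Category C] [Category D]

def IsRetractOfTargets (X : C) : Prop :=
  ∀ Y : C, Nonempty (X ⟶ Y) → Nonempty (Retract X Y)

lemma IsRetractOfTargets.functor_obj (e : C ≌ D) {X : C} (hX : IsRetractOfTargets X) :
    IsRetractOfTargets (e.functor.obj X) := by
  rintro Y ⟨f⟩
  obtain ⟨r⟩ := hX (e.inverse.obj Y) ⟨e.toAdjunction.homEquiv _ _ f⟩
  exact ⟨(r.map e.functor).trans (.ofIso (e.counitIso.app Y))⟩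

end CategoryTheory

namespace SkFree

variable {S : Type} [Monoid S]

-- Reducible, so that instances such as `0 : Fin (of S 1)` are found.
variable (S) in
abbrev of (n : ℕ) : SkFree S := n

@[ext]
lemma hom_ext {n m : SkFree S} {f g : n ⟶ m} (h : ∀ p, f.1 p = g.1 p) : f = g :=
  Subtype.ext (funext h)

@[simp]
lemma comp_apply {n m k : SkFree S} (f : n ⟶ m) (g : m ⟶ k) (p : S × Fin n) :
    (f ≫ g).1 p = g.1 (f.1 p) := rfl

@[simp]
lemma id_apply {n : SkFree S} (p : S × Fin n) : (𝟙 n : n ⟶ n).1 p = p := rfl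

lemma hom_apply_mk {n m : SkFree S} (f : n ⟶ m) (t : S) (c : Fin n) :
    f.1 (t, c) = (t * (f.1 (1, c)).1, (f.1 (1, c)).2) := by
  simpa using f.2 t (1, c)

def homOfElem {n : SkFree S} (a : S × Fin n) : of S 1 ⟶ n :=
  ⟨fun p => (p.1 * a.1, a.2), fun s p => by simp [mul_assoc]⟩

@[simp]
lemma homOfElem_apply {n : SkFree S} (a : S × Fin n) (p : S × Fin (of S 1)) :
    (homOfElem a).1 p = (p.1 * a.1, a.2) := rfl

lemma homOfElem_comp {n m : SkFree S} (a : S × Fin n) (f : n ⟶ m) :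
    homOfElem a ≫ f = homOfElem (f.1 a) := by
  ext p : 1
  simpa using f.2 p.1 a

lemma homOfElem_mul {n : SkFree S} (s : S) (a : S × Fin n) :
    homOfElem (s * a.1, a.2) = homOfElem (n := of S 1) (s, 0) ≫ homOfElem a := by
  ext p : 1
  simp [mul_assoc]

lemma homOfElem_apply_one {n : SkFree S} (f : of S 1 ⟶ n) : homOfElem (f.1 (1, 0)) = f := by
  ext ⟨t, c⟩ : 1
  rw [Subsingleton.elim c 0, hom_apply_mk f t 0]
  rfl

def homOfElemEquiv (n : SkFree S) : (S × Fin n) ≃ (of S 1 ⟶ n) where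
  toFun := homOfElem
  invFun f := f.1 (1, 0)
  left_inv a := by simp
  right_inv := homOfElem_apply_one

def endOneMulEquiv : End (of S 1) ≃* Sᵐᵒᵖ where
  toFun f := .op (f.1 (1, 0)).1
  invFun s := homOfElem (s.unop, 0)
  left_inv f := by
    conv_rhs => rw [← homOfElem_apply_one f]
    exact congrArg homOfElem (Prod.ext rfl (Subsingleton.elim _ _))
  right_inv s := by simp
  map_mul' f g := by
    conv_lhs => rw [← homOfElem_apply_one f, ← homOfElem_apply_one g]
    simp only [End.mul_def, comp_apply, homOfElem_apply, one_mul, MulOpposite.op_mul]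

def toOne (n : SkFree S) : n ⟶ of S 1 :=
  ⟨fun p => (p.1, 0), fun _ _ => rfl⟩

def generatorEmbedding {n m : SkFree S} (h : Retract n m) : Fin n ↪ Fin m where
  toFun j := (h.i.1 (1, j)).2
  inj' := by
    have key (k : Fin n) : (h.r.1 (1, (h.i.1 (1, k)).2)).2 = k := by
      rw [← congrArg Prod.snd (hom_apply_mk h.r _ _), ← comp_apply, h.retract]
      rfl
    intro j j' hjj'
    rw [← key j, ← key j']
    exact congrArg (fun c => (h.r.1 (1, c)).2) hjj'

lemma isRetractOfTargets_iff (n : SkFree S) : IsRetractOfTargets n ↔ n = of S 1 := by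
  constructor
  · intro hn
    obtain ⟨h⟩ := hn (of S 1) ⟨toOne n⟩
    exact Nat.le_antisymm (Fin.le_of_embedding (generatorEmbedding h))
      (Fin.pos_iff_nonempty.2 ⟨(h.r.1 (1, 0)).2⟩)
  · rintro rfl m ⟨f⟩
    refine ⟨⟨homOfElem (1, (f.1 (1, 0)).2), toOne m, ?_⟩⟩
    ext ⟨t, c⟩ : 1
    simp [toOne, Subsingleton.elim c 0]

lemma functor_obj_one (e : SkFree S ≌ SkFree S) : e.functor.obj (of S 1) = of S 1 :=
  (isRetractOfTargets_iff _).1 <| ((isRetractOfTargets_iff _).2 rfl).functor_obj e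

variable {φ : SkFree S ⥤ SkFree S} (hφ : φ.FullyFaithful) (h1 : φ.obj (of S 1) = of S 1)

noncomputable def inducedMulEquiv : S ≃* S :=
  MulEquiv.unop <| endOneMulEquiv.symm.trans <|
    (hφ.mulEquivEnd _).trans <| (eqToIso h1).conj.trans endOneMulEquiv

noncomputable def inducedActEquiv (n : SkFree S) : (S × Fin n) ≃ (S × Fin (φ.obj n)) :=
  (homOfElemEquiv n).trans <| hφ.homEquiv.trans <|
    ((eqToIso h1).homCongr (Iso.refl _)).trans (homOfElemEquiv _).symm

lemma homOfElem_inducedMulEquiv (s : S) :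
    homOfElem (n := of S 1) (inducedMulEquiv hφ h1 s, 0) =
      eqToHom h1.symm ≫ φ.map (homOfElem (n := of S 1) (s, 0)) ≫ eqToHom h1 :=
  endOneMulEquiv.symm_apply_apply _

lemma inducedActEquiv_apply (n : SkFree S) (a : S × Fin n) :
    inducedActEquiv hφ h1 n a = (eqToHom h1.symm ≫ φ.map (homOfElem a)).1 (1, 0) := by
  simp [inducedActEquiv, homOfElemEquiv, Iso.homCongr_apply]

lemma inducedActEquiv_mul (n : SkFree S) (s : S) (a : S × Fin n) :
    inducedActEquiv hφ h1 n (s * a.1, a.2) =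
      (inducedMulEquiv hφ h1 s * (inducedActEquiv hφ h1 n a).1,
        (inducedActEquiv hφ h1 n a).2) := by
  have h : eqToHom h1.symm ≫ φ.map (homOfElem (n := of S 1) (s, 0)) =
      homOfElem (n := of S 1) (inducedMulEquiv hφ h1 s, 0) ≫ eqToHom h1.symm := by
    simp [homOfElem_inducedMulEquiv]
  rw [inducedActEquiv_apply, inducedActEquiv_apply, homOfElem_mul, φ.map_comp, reassoc_of% h,
    comp_apply, homOfElem_apply, one_mul, hom_apply_mk]

lemma map_inducedActEquiv {n m : SkFree S} (f : n ⟶ m) (a : S × Fin n) :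
    (φ.map f).1 (inducedActEquiv hφ h1 n a) = inducedActEquiv hφ h1 m (f.1 a) := by
  simp only [inducedActEquiv_apply, ← comp_apply, Category.assoc, ← φ.map_comp, homOfElem_comp]

lemma semiInnerWithSk_inducedMulEquiv : SemiInnerWithSk S φ (inducedMulEquiv hφ h1) :=
  ⟨inducedActEquiv hφ h1, inducedActEquiv_mul hφ h1, map_inducedActEquiv hφ h1⟩

end SkFree

/-- Every automorphism of the skeleton category `_S𝒜⁰_Sk` of finitely
generated free left `S`-acts is semi-inner. -/
theorem skeleton_automorphism_semiInner (S : Type) [Monoid S]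
    (φ : SkFree S ⥤ SkFree S) (hφ : IsCatAutomorphism φ) :
    SemiInnerSk S φ := by
  obtain ⟨ψ, hφψ, hψφ⟩ := hφ
  let e : SkFree S ≌ SkFree S := .mk φ ψ (eqToIso hφψ.symm) (eqToIso hψφ)
  exact ⟨_, SkFree.semiInnerWithSk_inducedMulEquiv e.fullyFaithfulFunctor
    (SkFree.functor_obj_one e)⟩
end

section
/- Let Ω be a nonempty set and S_Ω the free monoid on Ω, so that the variety of unary algebras with operations Ω is the variety of left S_Ω-acts. Then every automorphism of the category 𝒜_Ω⁰ of finitely generated free S_Ω-acts is inner if and only if Ω has exactly one element (i.e., the variety is the variety of mono-unary algebras). -/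
/-!
An automorphism `φ` of the category of free `S`-acts has `φ(S) ≅ S` when `S` is commutative:
`End S ≅ Sᵐᵒᵖ` is then commutative, and two distinct generators `y, z` of `φ(S)` would give the
non-commuting endomorphisms "send everything to `y`" and "send everything to `z`". Conjugating by
such a `θ : S ≅ φ(S)`, `φ` induces a surjective endomorphism of `End S ≅ Sᵐᵒᵖ`, which for the free
monoid on at most one letter must be the identity (lengths multiply). Then `a ↦ φ(s ↦ s • a)(θ 1)`
is a natural isomorphism `𝟭 ≅ φ`.

Conversely, if `a ≠ b` in `Ω`, the swap of `a` and `b` induces an automorphism `α` of `S_Ω`, and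
twisting all morphisms by `α` is an automorphism of the category. A natural isomorphism from it to
the identity evaluated at `S` is right multiplication by a unit `u` with `α s * u = u * s`; but the
only unit of a free monoid is `1`, while `α` moves `a`.
-/

open CategoryTheory

/-- Objects of the category `_S𝒜⁰` of finitely generated free left `S`-acts:
the free `S`-act on a finite set `X`, with carrier `S × X`. -/
structure FreeAct (S : Type) [Monoid S] : Type 1 where
  X : Type
  finX : Finite X

/-- The category `_S𝒜⁰`: morphisms are the `S`-equivariant maps. -/
instance (S : Type) [Monoid S] : Category (FreeAct S) where
  Hom A B := {f : S × A.X → S × B.X // IsActHom S f}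
  id A := ⟨fun p => p, fun _ _ => rfl⟩
  comp f g := ⟨fun p => g.1 (f.1 p), fun s p => by
    show g.1 (f.1 (s * p.1, p.2)) = _; rw [f.2 s p]; exact g.2 s (f.1 p)⟩

namespace FreeMonoid

variable {Ω : Type*} [Subsingleton Ω]

lemma eq_of_length_eq {x y : FreeMonoid Ω} (h : x.length = y.length) : x = y :=
  toList.injective <| List.ext_getElem h fun _ _ _ => Subsingleton.elim _ _

lemma mul_comm_of_subsingleton (x y : FreeMonoid Ω) : x * y = y * x :=
  eq_of_length_eq <| by simp only [length_mul, Nat.add_comm]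

lemma length_map_eq_mul {M : Type*} (δ : FreeMonoid Ω →* FreeMonoid M) (a : Ω)
    (z : FreeMonoid Ω) : (δ z).length = z.length * (δ (of a)).length := by
  induction z using FreeMonoid.inductionOn' with
  | one => simp [length_one]
  | of_mul b z ih =>
    rw [map_mul, length_mul, ih, Subsingleton.elim b a, length_mul, length_of]
    ring

lemma eq_id_of_surjective (δ : FreeMonoid Ω →* FreeMonoid Ω) (hδ : Function.Surjective δ) :
    δ = MonoidHom.id _ := by
  refine hom_eq fun a => eq_of_length_eq ?_
  obtain ⟨z, hz⟩ := hδ (of a)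
  have h := length_map_eq_mul δ a z
  rw [hz, length_of] at h
  rw [MonoidHom.id_apply, length_of, Nat.eq_one_of_mul_eq_one_left h.symm]

end FreeMonoid

lemma IsCatAutomorphism.isEquivalence {C : Type*} [Category C] {φ : C ⥤ C}
    (h : IsCatAutomorphism φ) : φ.IsEquivalence := by
  obtain ⟨ψ, hφψ, hψφ⟩ := h
  exact (CategoryTheory.Equivalence.mk φ ψ (eqToIso hφψ.symm) (eqToIso hψφ)).isEquivalence_functor

namespace FreeAct

variable {S : Type} [Monoid S]

lemma hom_ext {A B : FreeAct S} {f g : A ⟶ B} (h : ∀ p, f.1 p = g.1 p) : f = g :=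
  Subtype.ext (funext h)

@[simp]
lemma comp_apply {A B C : FreeAct S} (f : A ⟶ B) (g : B ⟶ C) (p : S × A.X) :
    (f ≫ g).1 p = g.1 (f.1 p) := rfl

@[simp]
lemma id_apply (A : FreeAct S) (p : S × A.X) : (𝟙 A : A ⟶ A).1 p = p := rfl

lemma isIso_of_bijective {A B : FreeAct S} {f : A ⟶ B} (hf : Function.Bijective f.1) :
    IsIso f := by
  let e := Equiv.ofBijective f.1 hf
  have he : IsActHom S e.symm := fun s p => e.injective <| by
    rw [Equiv.apply_symm_apply, Equiv.ofBijective_apply, f.2 s, ← Equiv.ofBijective_apply f.1 hf,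
      Equiv.apply_symm_apply]
  exact ⟨⟨⟨e.symm, he⟩, hom_ext e.symm_apply_apply, hom_ext e.apply_symm_apply⟩⟩

def isoOfEquiv {A B : FreeAct S} (e : A.X ≃ B.X) : A ≅ B where
  hom := ⟨fun p => (p.1, e p.2), fun _ _ => rfl⟩
  inv := ⟨fun p => (p.1, e.symm p.2), fun _ _ => rfl⟩
  hom_inv_id := hom_ext fun p => by simp
  inv_hom_id := hom_ext fun p => by simp

variable (S) in
def regular : FreeAct S := ⟨Unit, inferInstance⟩

instance : Unique (regular S).X := inferInstanceAs (Unique Unit)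

def homRegularEquiv (A : FreeAct S) : (regular S ⟶ A) ≃ S × A.X where
  toFun f := f.1 (1, ())
  invFun a := ⟨fun p => (p.1 * a.1, a.2), fun s p => by simp [mul_assoc]⟩
  left_inv f := hom_ext fun ⟨s, ()⟩ => by simpa using (f.2 s (1, ())).symm
  right_inv a := by simp

lemma homRegularEquiv_comp {A B : FreeAct S} (f : regular S ⟶ A) (g : A ⟶ B) :
    homRegularEquiv B (f ≫ g) = g.1 (homRegularEquiv A f) := rfl

def rmul (s : S) : regular S ⟶ regular S := (homRegularEquiv (regular S)).symm (s, ())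

@[simp]
lemma rmul_apply (s : S) (p : S × (regular S).X) : (rmul s).1 p = (p.1 * s, p.2) := rfl

lemma rmul_mul (s t : S) : rmul (s * t) = rmul s ≫ rmul t :=
  hom_ext fun p => by simp [mul_assoc]

lemma rmul_one : rmul (1 : S) = 𝟙 (regular S) :=
  hom_ext fun p => by simp

lemma homRegularEquiv_rmul (s : S) : homRegularEquiv (regular S) (rmul s) = (s, ()) :=
  Equiv.apply_symm_apply _ _

lemma rmul_injective : Function.Injective (rmul : S → (regular S ⟶ regular S)) :=
  fun s t h => by simpa [homRegularEquiv_rmul] using congrArg (fun f => (homRegularEquiv _ f).1) h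

lemma rmul_homRegularEquiv (f : regular S ⟶ regular S) :
    rmul (homRegularEquiv (regular S) f).1 = f :=
  (homRegularEquiv (regular S)).symm_apply_apply f

lemma homRegularEquiv_rmul_comp {A : FreeAct S} (s : S) (g : regular S ⟶ A) :
    homRegularEquiv A (rmul s ≫ g) = (s * (homRegularEquiv A g).1, (homRegularEquiv A g).2) := by
  have := g.2 s (1, ())
  simp only [mul_one] at this
  rw [homRegularEquiv_comp, homRegularEquiv_rmul]
  exact this

lemma homRegularEquiv_symm_smul {A : FreeAct S} (s : S) (a : S × A.X) :
    (homRegularEquiv A).symm (s * a.1, a.2) = rmul s ≫ (homRegularEquiv A).symm a := by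
  rw [Equiv.symm_apply_eq, homRegularEquiv_rmul_comp, Equiv.apply_symm_apply]

lemma homRegularEquiv_symm_comp {A B : FreeAct S} (a : S × A.X) (g : A ⟶ B) :
    (homRegularEquiv B).symm (g.1 a) = (homRegularEquiv A).symm a ≫ g := by
  rw [Equiv.symm_apply_eq, homRegularEquiv_comp, Equiv.apply_symm_apply]

lemma regular_endo_commute (hS : ∀ s t : S, s * t = t * s) (f g : regular S ⟶ regular S) :
    f ≫ g = g ≫ f := by
  rw [← rmul_homRegularEquiv f, ← rmul_homRegularEquiv g, ← rmul_mul, ← rmul_mul, hS]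

lemma subsingleton_X_of_endo_commute (A : FreeAct S) (h : ∀ f g : A ⟶ A, f ≫ g = g ≫ f) :
    Subsingleton A.X := by
  refine ⟨fun y z => ?_⟩
  let c (x : A.X) : A ⟶ A := ⟨fun p => (p.1, x), fun _ _ => rfl⟩
  simpa [c] using congrArg (fun k : A ⟶ A => (k.1 (1, y)).2) (h (c z) (c y))

lemma nonempty_X_obj {T : Type} [Monoid T] (φ : FreeAct S ⥤ FreeAct T) [φ.Full]
    (A : FreeAct S) [Nonempty A.X] : Nonempty (φ.obj A).X := by
  by_contra h
  have : IsEmpty (φ.obj A).X := not_nonempty_iff.mp h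
  let empty : FreeAct S := ⟨Empty, inferInstance⟩
  obtain ⟨f, -⟩ := φ.map_surjective
    (X := A) (Y := empty) ⟨fun p => isEmptyElim p.2, fun _ p => isEmptyElim p.2⟩
  exact (f.1 (1, Classical.arbitrary A.X)).2.elim

lemma nonempty_regular_iso_obj (hS : ∀ s t : S, s * t = t * s) (φ : FreeAct S ⥤ FreeAct S)
    [φ.Full] : Nonempty (regular S ≅ φ.obj (regular S)) := by
  have : Nonempty (regular S).X := ⟨()⟩
  obtain ⟨x⟩ := nonempty_X_obj φ (regular S)
  have := subsingleton_X_of_endo_commute (φ.obj (regular S)) fun f g => by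
    obtain ⟨f, rfl⟩ := φ.map_surjective f
    obtain ⟨g, rfl⟩ := φ.map_surjective g
    rw [← φ.map_comp, ← φ.map_comp, regular_endo_commute hS]
  have := uniqueOfSubsingleton x
  exact ⟨isoOfEquiv (Equiv.ofUnique _ _)⟩

section Twist

def twist (α : S ≃* S) : FreeAct S ⥤ FreeAct S where
  obj A := A
  map f := ⟨fun p => ((α (f.1 (α.symm p.1, p.2)).1), (f.1 (α.symm p.1, p.2)).2),
    fun s p => by
      dsimp only
      rw [map_mul, f.2 (α.symm s) (α.symm p.1, p.2)]
      simp⟩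
  map_id _ := hom_ext fun p => by simp
  map_comp _ _ := hom_ext fun p => by simp

lemma twist_comp_twist_symm (α : S ≃* S) : twist α ⋙ twist α.symm = 𝟭 (FreeAct S) :=
  CategoryTheory.Functor.ext (fun _ => rfl) fun _ _ f => hom_ext fun p => by
    simp only [twist, Functor.comp_map, MulEquiv.symm_symm, MulEquiv.symm_apply_apply, Functor.id_map]
    rfl

lemma isCatAutomorphism_twist (α : S ≃* S) : IsCatAutomorphism (twist α) :=
  ⟨twist α.symm, twist_comp_twist_symm α, twist_comp_twist_symm α.symm⟩

lemma twist_map_rmul (α : S ≃* S) (s : S) : (twist α).map (rmul s) = rmul (α s) :=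
  hom_ext fun p => by
    simp only [twist, rmul_apply, map_mul, MulEquiv.apply_symm_apply]
    rfl

lemma exists_unit_conj_of_twist_iso (α : S ≃* S) (η : twist α ≅ 𝟭 (FreeAct S)) :
    ∃ u : Sˣ, ∀ s, α s * u = u * s := by
  obtain ⟨w, hw⟩ : ∃ w, rmul w = η.hom.app (regular S) := ⟨_, rmul_homRegularEquiv _⟩
  obtain ⟨v, hv⟩ : ∃ v, rmul v = η.inv.app (regular S) := ⟨_, rmul_homRegularEquiv _⟩
  have hwv : w * v = 1 := rmul_injective <| by
    rw [rmul_mul, hw, hv, rmul_one]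
    exact η.hom_inv_id_app _
  have hvw : v * w = 1 := rmul_injective <| by
    rw [rmul_mul, hw, hv, rmul_one]
    exact η.inv_hom_id_app _
  refine ⟨⟨w, v, hwv, hvw⟩, fun s => rmul_injective ?_⟩
  have := η.hom.naturality (rmul s)
  rw [twist_map_rmul, Functor.id_map, ← hw] at this
  rw [rmul_mul, rmul_mul]
  exact this

end Twist

section Conj

variable (φ : FreeAct S ⥤ FreeAct S) (θ : regular S ≅ φ.obj (regular S))

def conjRmul : S →* S where
  toFun s := (homRegularEquiv (regular S) (θ.hom ≫ φ.map (rmul s) ≫ θ.inv)).1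
  map_one' := rmul_injective <| by
    rw [rmul_homRegularEquiv, rmul_one, φ.map_id, Category.id_comp, θ.hom_inv_id]
  map_mul' s t := rmul_injective <| by
    rw [rmul_mul _ (homRegularEquiv _ _).1, rmul_homRegularEquiv, rmul_homRegularEquiv,
      rmul_homRegularEquiv, rmul_mul, φ.map_comp]
    simp only [Category.assoc, θ.inv_hom_id_assoc]

lemma rmul_conjRmul (s : S) : rmul (conjRmul φ θ s) = θ.hom ≫ φ.map (rmul s) ≫ θ.inv :=
  rmul_homRegularEquiv _

lemma conjRmul_surjective [φ.Full] : Function.Surjective (conjRmul φ θ) := by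
  intro t
  obtain ⟨f, hf⟩ := φ.map_surjective (θ.inv ≫ rmul t ≫ θ.hom)
  refine ⟨(homRegularEquiv _ f).1, rmul_injective ?_⟩
  rw [rmul_conjRmul, rmul_homRegularEquiv, hf]
  simp

variable {φ θ}

lemma rmul_comp_hom_of_conjRmul_eq_id (h : conjRmul φ θ = MonoidHom.id S) (s : S) :
    rmul s ≫ θ.hom = θ.hom ≫ φ.map (rmul s) := by
  rw [← Iso.eq_comp_inv, Category.assoc, ← rmul_conjRmul, h, MonoidHom.id_apply]

variable (φ θ) [φ.Full] [φ.Faithful]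

noncomputable def carrierEquiv (A : FreeAct S) : S × A.X ≃ S × (φ.obj A).X :=
  (homRegularEquiv A).symm.trans <| (Functor.FullyFaithful.ofFullyFaithful φ).homEquiv.trans <|
    θ.symm.homFromEquiv.trans (homRegularEquiv (φ.obj A))

lemma carrierEquiv_apply (A : FreeAct S) (a : S × A.X) :
    carrierEquiv φ θ A a = homRegularEquiv (φ.obj A) (θ.hom ≫ φ.map ((homRegularEquiv A).symm a)) :=
  rfl

variable {φ θ}

lemma isActHom_carrierEquiv (h : conjRmul φ θ = MonoidHom.id S) (A : FreeAct S) :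
    IsActHom S (carrierEquiv φ θ A) := by
  intro s a
  rw [carrierEquiv_apply, carrierEquiv_apply, homRegularEquiv_symm_smul, φ.map_comp,
    ← Category.assoc, ← rmul_comp_hom_of_conjRmul_eq_id h, Category.assoc, homRegularEquiv_rmul_comp]

noncomputable def isoOfConjRmulEqId (h : conjRmul φ θ = MonoidHom.id S) : 𝟭 (FreeAct S) ≅ φ :=
  NatIso.ofComponents
    (fun A => have : IsIso (⟨_, isActHom_carrierEquiv h A⟩ : A ⟶ φ.obj A) :=
        isIso_of_bijective (carrierEquiv φ θ A).bijective
      asIso ⟨_, isActHom_carrierEquiv h A⟩)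
    fun {A B} g => hom_ext fun a => by
      simp only [Functor.id_map, asIso_hom, comp_apply, carrierEquiv_apply]
      rw [← homRegularEquiv_comp, Category.assoc, ← φ.map_comp, homRegularEquiv_symm_comp]

end Conj

end FreeAct

open FreeAct in
theorem unary_perfect_iff_monounary_general (Ω : Type) :
    (∀ φ : FreeAct (FreeMonoid Ω) ⥤ FreeAct (FreeMonoid Ω), IsCatAutomorphism φ →
        Nonempty (φ ≅ 𝟭 (FreeAct (FreeMonoid Ω)))) ↔
      Subsingleton Ω := by
  constructor
  · intro hinner
    by_contra hΩ
    obtain ⟨a, b, hab⟩ := (not_subsingleton_iff_nontrivial.mp hΩ).exists_pair_ne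
    classical
    let α := FreeMonoid.freeMonoidCongr (Equiv.swap a b)
    obtain ⟨η⟩ := hinner (twist α) (isCatAutomorphism_twist α)
    obtain ⟨u, hu⟩ := exists_unit_conj_of_twist_iso α η
    have hfix : α (.of a) = .of a := by simpa [Subsingleton.elim u 1] using hu (.of a)
    simp only [α, FreeMonoid.freeMonoidCongr_of, Equiv.swap_apply_left,
      FreeMonoid.of_injective.eq_iff] at hfix
    exact hab hfix.symm
  · intro hΩ φ hφ
    have := hφ.isEquivalence
    obtain ⟨θ⟩ := nonempty_regular_iso_obj FreeMonoid.mul_comm_of_subsingleton φ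
    exact ⟨(isoOfConjRmulEqId
      (FreeMonoid.eq_id_of_surjective _ (conjRmul_surjective φ θ))).symm⟩

/-- **Corollary 9, second part.** Let `Ω` be a nonempty set and `S_Ω` the
free monoid on `Ω`, so that the variety of unary algebras with operations `Ω` is the
variety of left `S_Ω`-acts. Then every automorphism of the category `𝒜_Ω⁰` of finitely
generated free `S_Ω`-acts is inner iff `Ω` has exactly one element. -/
theorem unary_perfect_iff_monounary (Ω : Type) [Nonempty Ω] :
    (∀ φ : FreeAct (FreeMonoid Ω) ⥤ FreeAct (FreeMonoid Ω), IsCatAutomorphism φ →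
        Nonempty (φ ≅ 𝟭 (FreeAct (FreeMonoid Ω)))) ↔
      Subsingleton Ω :=
  unary_perfect_iff_monounary_general Ω
end
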